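/- arXiv:2308.13819 — 4 statements merged into one kernel-verified Lean document; each statement's English description precedes it below -/
import Mathlib

section
/- Let A = (J - R)Q where J ∈ ℝ^{n×n} is skew-symmetric, R ∈ ℝ^{n×n} is symmetric positive definite, and Q ∈ ℝ^{n×n} is symmetric positive definite. Then every eigenvalue λ of A satisfies Re(λ) < 0. -/
/-!
Work over `ℂ`. Put `w = Q v`. Since `Q` is Hermitian, `w* (J - R) w = μ v* Q v`, where `v* Q v`
is a positive real number. On the left, `w* J w` is purely imaginary because `J` is
skew-Hermitian, and `w* R w` is positive, so the real part is negative, hence so is `Re μ`.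
-/

open Matrix

open scoped ComplexOrder MatrixOrder

namespace Matrix

variable {m n : Type*} {𝕜 : Type*} [RCLike 𝕜]

theorem conjTranspose_map_ofReal (M : Matrix m n ℝ) :
    (M.map ((↑) : ℝ → 𝕜))ᴴ = Mᵀ.map ((↑) : ℝ → 𝕜) := by
  rw [← conjTranspose_map _ fun r => by simp, conjTranspose_eq_transpose_of_trivial]

variable [Fintype n]

/-- Write `M = Bᴴ B`: this stays positive semidefinite over `𝕜`, and its determinant stays
nonzero. -/
theorem PosDef.map_ofReal {M : Matrix n n ℝ} (hM : M.PosDef) :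
    (M.map ((↑) : ℝ → 𝕜)).PosDef := by
  classical
  have hpsd : (M.map ((↑) : ℝ → 𝕜)).PosSemidef := by
    obtain ⟨B, rfl⟩ := CStarAlgebra.nonneg_iff_eq_star_mul_self.mp hM.posSemidef.nonneg
    rw [← RCLike.algebraMap_eq_ofReal, ← RingHom.mapMatrix_apply, map_mul, RingHom.mapMatrix_apply,
      RingHom.mapMatrix_apply, RCLike.algebraMap_eq_ofReal, star_eq_conjTranspose,
      conjTranspose_eq_transpose_of_trivial, ← conjTranspose_map_ofReal]
    exact posSemidef_conjTranspose_mul_self _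
  rw [hpsd.posDef_iff_det_ne_zero, ← RCLike.algebraMap_eq_ofReal, ← RingHom.mapMatrix_apply,
    ← RingHom.map_det]
  exact RCLike.ofReal_ne_zero.mpr hM.det_pos.ne'

theorem re_star_dotProduct_mulVec_self_eq_zero {J : Matrix n n 𝕜} (hJ : Jᴴ = -J) (x : n → 𝕜) :
    RCLike.re (star x ⬝ᵥ J *ᵥ x) = 0 := by
  have hconj : star (star x ⬝ᵥ J *ᵥ x) = -(star x ⬝ᵥ J *ᵥ x) := by
    rw [← star_dotProduct_star, star_star, star_mulVec, ← dotProduct_mulVec, hJ, neg_mulVec,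
      dotProduct_neg]
  have hre := congrArg RCLike.re hconj
  rw [RCLike.star_def, RCLike.conj_re, map_neg] at hre
  linarith

theorem re_lt_zero_of_sub_mul_mulVec_eq_smul {J R Q : Matrix n n 𝕜} (hJ : Jᴴ = -J)
    (hR : R.PosDef) (hQ : Q.PosDef) {μ : 𝕜} {v : n → 𝕜} (hv : v ≠ 0)
    (hμ : ((J - R) * Q) *ᵥ v = μ • v) : RCLike.re μ < 0 := by
  obtain ⟨q, hq, hvQv⟩ := RCLike.pos_iff_exists_ofReal.mp (hQ.dotProduct_mulVec_pos hv)
  set w := Q *ᵥ v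
  have hw : w ≠ 0 := by
    rintro hw0
    rw [hw0, dotProduct_zero, RCLike.ofReal_eq_zero] at hvQv
    exact hq.ne' hvQv
  have hwJRw : star w ⬝ᵥ (J - R) *ᵥ w = μ * q := by
    rw [mulVec_mulVec, hμ, star_mulVec, hQ.isHermitian.eq, ← dotProduct_mulVec, mulVec_smul,
      dotProduct_smul, ← hvQv, smul_eq_mul]
  have hre : RCLike.re (star w ⬝ᵥ (J - R) *ᵥ w) < 0 := by
    rw [sub_mulVec, dotProduct_sub, map_sub, re_star_dotProduct_mulVec_self_eq_zero hJ, zero_sub,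
      neg_lt_zero]
    exact hR.re_dotProduct_pos hw
  rw [hwJRw, RCLike.re_mul_ofReal] at hre
  exact neg_of_mul_neg_left hre hq.le

end Matrix

/-- For `A = (J - R)Q` with `J` skew-symmetric and `R, Q` symmetric positive
definite, every (complex) eigenvalue of `A` has strictly negative real part. -/
theorem stmt_3 (n : ℕ) (J R Q : Matrix (Fin n) (Fin n) ℝ)
    (hJ : Jᵀ = -J) (hR : R.PosDef) (hQ : Q.PosDef)
    (μ : ℂ) (v : Fin n → ℂ) (hv : v ≠ 0)
    (heig : (((J - R) * Q).map (fun r : ℝ => (r : ℂ))).mulVec v = μ • v) :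
    μ.re < 0 := by
  have hJℂ : (J.map (RCLike.ofReal : ℝ → ℂ))ᴴ = -J.map RCLike.ofReal := by
    rw [conjTranspose_map_ofReal, hJ, Matrix.map_neg _ RCLike.ofReal_neg]
  refine re_lt_zero_of_sub_mul_mulVec_eq_smul hJℂ hR.map_ofReal hQ.map_ofReal hv ?_
  change Complex.ofRealHom.mapMatrix ((J - R) * Q) *ᵥ v = μ • v at heig
  rwa [map_mul, map_sub] at heig
end

section
/- Consider the quadratic ODE ẋ(t) = Ax(t) + H(x(t) ⊗ x(t)) where A = (J - R)Q with J skew-symmetric and R, Q symmetric positive definite, and H ∈ ℝ^{n×n²}. Let V(x) = ½ xᵀQx. Then along any solution x(t), the derivative of V satisfies d/dt V(x(t)) ≤ -σ_min(L)² ‖x(t)‖₂² + ‖Q‖₂ ‖H‖₂ ‖x(t)‖₂³, where L satisfies LLᵀ = QᵀRQ and σ_min(L) is the smallest singular value of L. In particular, d/dt V(x(t)) < 0 whenever 0 < ‖x(t)‖₂ < σ_min(L)²/(‖Q‖₂‖H‖₂). -/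
/-!
Along the flow, `d/dt V(x) = ⟨x, Q ẋ⟩ = ⟨x, Q(J - R)Q x⟩ + ⟨Q x, H(x ⊗ x)⟩`. Since `QJQ` is
skew-symmetric it contributes nothing, and the dissipative part is
`-xᵀ QᵀRQ x = -‖Lᵀ x‖² ≤ -σ² ‖x‖²`. By Cauchy–Schwarz the quadratic part is at most
`‖Q‖ ‖x‖ · ‖H‖ ‖x ⊗ x‖ = ‖Q‖ ‖H‖ ‖x‖³`, because `‖x ⊗ x‖ = ‖x‖²`.
-/

open Matrix

section

variable {𝕜 ι m : Type*} [NontriviallyNormedField 𝕜] [Fintype ι] {t : 𝕜}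

theorem HasDerivAt.dotProduct {x y : 𝕜 → ι → 𝕜} {x' y' : ι → 𝕜}
    (hx : HasDerivAt x x' t) (hy : HasDerivAt y y' t) :
    HasDerivAt (fun s => x s ⬝ᵥ y s) (x' ⬝ᵥ y t + x t ⬝ᵥ y') t := by
  have := HasDerivAt.fun_sum fun i (_ : i ∈ Finset.univ) =>
    (hasDerivAt_pi.mp hx i).fun_mul (hasDerivAt_pi.mp hy i)
  rw [Finset.sum_add_distrib] at this
  exact this

theorem HasDerivAt.mulVec (A : Matrix m ι 𝕜) {y : 𝕜 → ι → 𝕜} {y' : ι → 𝕜}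
    (hy : HasDerivAt y y' t) : HasDerivAt (fun s => A *ᵥ y s) (A *ᵥ y') t :=
  hasDerivAt_pi.mpr fun i => by
    have h := (hasDerivAt_const t (A i)).dotProduct hy
    rw [zero_dotProduct, zero_add] at h
    exact h

theorem dotProduct_mulVec_comm_of_isSymm {R : Type*} [CommSemiring R] {A : Matrix ι ι R}
    (hA : A.IsSymm) (v w : ι → R) : v ⬝ᵥ A *ᵥ w = w ⬝ᵥ A *ᵥ v := by
  rw [dotProduct_mulVec, ← mulVec_transpose, hA.eq, dotProduct_comm]

theorem HasDerivAt.dotProduct_mulVec_self {A : Matrix ι ι 𝕜} (hA : A.IsSymm)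
    {x : 𝕜 → ι → 𝕜} {x' : ι → 𝕜} (hx : HasDerivAt x x' t) :
    HasDerivAt (fun s => x s ⬝ᵥ A *ᵥ x s) (2 * (x t ⬝ᵥ A *ᵥ x')) t := by
  convert hx.dotProduct (hx.mulVec A) using 1
  rw [dotProduct_mulVec_comm_of_isSymm hA x', two_mul]

theorem dotProduct_mulVec_self_eq_zero_of_transpose_eq_neg {R : Type*} [CommRing R]
    [IsAddTorsionFree R] {S : Matrix ι ι R} (hS : Sᵀ = -S) (v : ι → R) : v ⬝ᵥ S *ᵥ v = 0 := by
  rw [← self_eq_neg]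
  conv_lhs =>
    rw [dotProduct_mulVec, ← mulVec_transpose, hS, neg_mulVec, dotProduct_comm, dotProduct_neg]

theorem dotProduct_mulVec_sub_mul_mulVec_add {R : Type*} [CommRing R] [IsAddTorsionFree R]
    {J D Q : Matrix ι ι R} (hJ : Jᵀ = -J) (hQ : Q.IsSymm) (v w : ι → R) :
    v ⬝ᵥ Q *ᵥ (((J - D) * Q) *ᵥ v + w) = -(v ⬝ᵥ (Qᵀ * D * Q) *ᵥ v) + Q *ᵥ v ⬝ᵥ w := by
  have hQJQ : (Q * J * Q)ᵀ = -(Q * J * Q) := by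
    simp [transpose_mul, hJ, hQ.eq, Matrix.mul_assoc]
  have hQw : v ⬝ᵥ Q *ᵥ w = Q *ᵥ v ⬝ᵥ w := by
    rw [dotProduct_mulVec, ← mulVec_transpose, hQ.eq]
  have hsplit : Q * ((J - D) * Q) = Q * J * Q - Qᵀ * D * Q := by
    rw [hQ.eq]; noncomm_ring
  rw [mulVec_add, dotProduct_add, mulVec_mulVec, hsplit, sub_mulVec, dotProduct_sub,
    dotProduct_mulVec_self_eq_zero_of_transpose_eq_neg hQJQ, hQw, zero_sub]

theorem sum_sq_mul_sq_eq_sq_sum_sq {R : Type*} [CommSemiring R] (v : ι → R) :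
    ∑ p : ι × ι, (v p.1 * v p.2) ^ 2 = (∑ i, v i ^ 2) ^ 2 := by
  simp only [sq (∑ i, v i ^ 2), Finset.sum_mul_sum, Fintype.sum_prod_type, mul_pow]

theorem dotProduct_le_mul_of_sum_sq_le {R : Type*} [CommRing R] [LinearOrder R]
    [IsStrictOrderedRing R] {u v : ι → R} {a b : R} (ha : 0 ≤ a) (hb : 0 ≤ b)
    (hu : ∑ i, u i ^ 2 ≤ a ^ 2) (hv : ∑ i, v i ^ 2 ≤ b ^ 2) : u ⬝ᵥ v ≤ a * b :=
  le_of_sq_le_sq ((Finset.sum_mul_sq_le_sq_mul_sq _ u v).trans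
    ((mul_le_mul hu hv (Finset.sum_nonneg fun _ _ => sq_nonneg _) (sq_nonneg a)).trans_eq
      (mul_pow a b 2).symm)) (mul_nonneg ha hb)

end

theorem neg_mul_sq_add_mul_pow_three_neg {K : Type*} [Field K] [LinearOrder K]
    [IsStrictOrderedRing K] {r a c : K} (hr : 0 < r) (hrac : r < a / c) (ha : 0 ≤ a) :
    -a * r ^ 2 + c * r ^ 3 < 0 := by
  have hc : 0 < c := by
    by_contra! hc
    linarith [div_nonpos_of_nonneg_of_nonpos ha hc]
  have hrc : r * c < a := (lt_div_iff₀ hc).mp hrac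
  nlinarith [pow_pos hr 2]

theorem stmt_4_general (n : ℕ) (J R Q L : Matrix (Fin n) (Fin n) ℝ)
    (H : Matrix (Fin n) (Fin n × Fin n) ℝ)
    (hJ : Jᵀ = -J) (hQ : Q.PosDef)
    (hL : L * Lᵀ = Qᵀ * R * Q)
    (σ q h : ℝ) (hq0 : 0 ≤ q) (hh0 : 0 ≤ h)
    -- `σ` is the smallest singular value of `L`:
    (hσ : ∀ v : Fin n → ℝ, σ ^ 2 * ∑ i, v i ^ 2 ≤ v ⬝ᵥ (L * Lᵀ).mulVec v)
    -- `q` is (an upper bound for) the spectral norm of `Q`: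
    (hq : ∀ v : Fin n → ℝ, ∑ i, (Q.mulVec v) i ^ 2 ≤ q ^ 2 * ∑ i, v i ^ 2)
    -- `h` is (an upper bound for) the spectral norm of `H`:
    (hh : ∀ w : Fin n × Fin n → ℝ, ∑ i, (H.mulVec w) i ^ 2 ≤ h ^ 2 * ∑ p, w p ^ 2)
    (x : ℝ → Fin n → ℝ)
    (hx : ∀ t, HasDerivAt x
      (((J - R) * Q).mulVec (x t) + H.mulVec (fun p => x t p.1 * x t p.2)) t) :
    ∀ t,
      deriv (fun s => (1 / 2 : ℝ) * (x s ⬝ᵥ Q.mulVec (x s))) t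
        ≤ -σ ^ 2 * (∑ i, (x t i) ^ 2)
          + q * h * (Real.sqrt (∑ i, (x t i) ^ 2)) ^ 3 ∧
      ((0 < Real.sqrt (∑ i, (x t i) ^ 2) ∧
          Real.sqrt (∑ i, (x t i) ^ 2) < σ ^ 2 / (q * h)) →
        deriv (fun s => (1 / 2 : ℝ) * (x s ⬝ᵥ Q.mulVec (x s))) t < 0) := by
  intro t
  set ρ := ∑ i, x t i ^ 2
  have hρ : 0 ≤ ρ := Finset.sum_nonneg fun _ _ => sq_nonneg _
  set w : Fin n × Fin n → ℝ := fun p => x t p.1 * x t p.2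
  have hQs : Q.IsSymm := isHermitian_iff_isSymm.mp hQ.isHermitian
  have hV : deriv (fun s => (1 / 2 : ℝ) * (x s ⬝ᵥ Q *ᵥ x s)) t
      = -(x t ⬝ᵥ (L * Lᵀ) *ᵥ x t) + Q *ᵥ x t ⬝ᵥ H *ᵥ w := by
    rw [(((hx t).dotProduct_mulVec_self hQs).const_mul (1 / 2)).deriv,
      dotProduct_mulVec_sub_mul_mulVec_add hJ hQs, hL]
    ring
  have hcubic : Q *ᵥ x t ⬝ᵥ H *ᵥ w ≤ q * √ρ * (h * ρ) := by
    refine dotProduct_le_mul_of_sum_sq_le (by positivity) (by positivity) ?_ ?_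
    · rw [mul_pow, Real.sq_sqrt hρ]
      exact hq (x t)
    · rw [mul_pow, ← sum_sq_mul_sq_eq_sq_sum_sq]
      exact hh w
  have hbound : deriv (fun s => (1 / 2 : ℝ) * (x s ⬝ᵥ Q *ᵥ x s)) t
      ≤ -σ ^ 2 * ρ + q * h * √ρ ^ 3 := by
    have hρ_sq : ρ = √ρ ^ 2 := (Real.sq_sqrt hρ).symm
    calc _ ≤ -σ ^ 2 * ρ + q * √ρ * (h * ρ) := by linarith [hσ (x t)]
      _ = -σ ^ 2 * ρ + q * h * √ρ ^ 3 := by linear_combination (q * h * √ρ) * hρ_sq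
  refine ⟨hbound, fun ⟨hpos, hlt⟩ => hbound.trans_lt ?_⟩
  have := neg_mul_sq_add_mul_pow_three_neg hpos hlt (sq_nonneg σ)
  rwa [Real.sq_sqrt hρ] at this

/-- Along solutions of `ẋ = (J-R)Qx + H(x⊗x)` the Lyapunov candidate
`V(x) = ½ xᵀQx` satisfies
`d/dt V(x(t)) ≤ -σ_min(L)²‖x(t)‖² + ‖Q‖₂‖H‖₂‖x(t)‖³`, where `LLᵀ = QᵀRQ`;
in particular `d/dt V(x(t)) < 0` whenever `0 < ‖x(t)‖ < σ_min(L)²/(‖Q‖₂‖H‖₂)`. -/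
theorem stmt_4 (n : ℕ) (J R Q L : Matrix (Fin n) (Fin n) ℝ)
    (H : Matrix (Fin n) (Fin n × Fin n) ℝ)
    (hJ : Jᵀ = -J) (hR : R.PosDef) (hQ : Q.PosDef)
    (hL : L * Lᵀ = Qᵀ * R * Q)
    (σ q h : ℝ) (hσ0 : 0 ≤ σ) (hq0 : 0 ≤ q) (hh0 : 0 ≤ h)
    -- `σ` is the smallest singular value of `L`:
    (hσ : ∀ v : Fin n → ℝ, σ ^ 2 * ∑ i, v i ^ 2 ≤ v ⬝ᵥ (L * Lᵀ).mulVec v)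
    -- `q` is (an upper bound for) the spectral norm of `Q`:
    (hq : ∀ v : Fin n → ℝ, ∑ i, (Q.mulVec v) i ^ 2 ≤ q ^ 2 * ∑ i, v i ^ 2)
    -- `h` is (an upper bound for) the spectral norm of `H`:
    (hh : ∀ w : Fin n × Fin n → ℝ, ∑ i, (H.mulVec w) i ^ 2 ≤ h ^ 2 * ∑ p, w p ^ 2)
    (x : ℝ → Fin n → ℝ)
    (hx : ∀ t, HasDerivAt x
      (((J - R) * Q).mulVec (x t) + H.mulVec (fun p => x t p.1 * x t p.2)) t) :
    ∀ t,
      deriv (fun s => (1 / 2 : ℝ) * (x s ⬝ᵥ Q.mulVec (x s))) t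
        ≤ -σ ^ 2 * (∑ i, (x t i) ^ 2)
          + q * h * (Real.sqrt (∑ i, (x t i) ^ 2)) ^ 3 ∧
      ((0 < Real.sqrt (∑ i, (x t i) ^ 2) ∧
          Real.sqrt (∑ i, (x t i) ^ 2) < σ ^ 2 / (q * h)) →
        deriv (fun s => (1 / 2 : ℝ) * (x s ⬝ᵥ Q.mulVec (x s))) t < 0) :=
  stmt_4_general n J R Q L H hJ hQ hL σ q h hq0 hh0 hσ hq hh x hx
end

section
/- Let A ∈ ℝ^{n×n} and let Q ∈ ℝ^{n×n} be symmetric positive definite such that ½(QA + AᵀQ) is negative definite. Then A can be written as A = (J - R)Q where J = ½(AQ⁻¹ - Q⁻¹Aᵀ) is skew-symmetric and R = -½(AQ⁻¹ + Q⁻¹Aᵀ) is symmetric positive definite. -/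
/-!
Write `S = Q⁻¹`, which is symmetric. Then `J - R = A S`, so `(J - R) Q = A`, and the symmetry
of `S` makes `J` skew and `R` symmetric. Finally `R = Sᵀ (-½(QA + AᵀQ)) S` is a congruence of
a positive definite matrix by an invertible one, hence positive definite.
-/

open Matrix

theorem half_smul_sub_sub_neg_half_smul_add {K M : Type*} [Field K] [CharZero K]
    [AddCommGroup M] [Module K M] (x y : M) :
    (1 / 2 : K) • (x - y) - -((1 / 2 : K) • (x + y)) = x := by
  module

namespace Matrix

variable {n R : Type*} [Fintype n]

section CommRing

variable [CommRing R] {S : Matrix n n R}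

theorem transpose_mul_sub_mul_transpose (A : Matrix n n R) (hS : Sᵀ = S) :
    (A * S - S * Aᵀ)ᵀ = -(A * S - S * Aᵀ) := by
  rw [transpose_sub, transpose_mul, transpose_mul, transpose_transpose, hS, neg_sub]

theorem transpose_mul_add_mul_transpose (A : Matrix n n R) (hS : Sᵀ = S) :
    (A * S + S * Aᵀ)ᵀ = A * S + S * Aᵀ := by
  rw [transpose_add, transpose_mul, transpose_mul, transpose_transpose, hS, add_comm]

variable [DecidableEq n]

theorem inv_mul_mul_add_mul_mul_inv {Q : Matrix n n R} (hQ : IsUnit Q.det) (A B : Matrix n n R) :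
    Q⁻¹ * (Q * A + B * Q) * Q⁻¹ = A * Q⁻¹ + Q⁻¹ * B := by
  rw [Matrix.mul_add, Matrix.add_mul, ← Matrix.mul_assoc, nonsing_inv_mul _ hQ, Matrix.one_mul,
    Matrix.mul_assoc, mul_nonsing_inv_cancel_right _ _ hQ]

end CommRing

theorem PosDef.posDef_neg_smul_mul_inv_add_iff [DecidableEq n] {K : Type*} [Field K]
    [PartialOrder K] [StarRing K] {Q : Matrix n n K} (hQ : Q.PosDef) (A : Matrix n n K) (c : K) :
    (-(c • (A * Q⁻¹ + Q⁻¹ * Aᴴ))).PosDef ↔ (-(c • (Q * A + Aᴴ * Q))).PosDef := by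
  have hQdet : IsUnit Q.det := (isUnit_iff_isUnit_det Q).1 hQ.isUnit
  have hcongr :
      star Q⁻¹ * (-(c • (Q * A + Aᴴ * Q))) * Q⁻¹ = -(c • (A * Q⁻¹ + Q⁻¹ * Aᴴ)) := by
    rw [star_eq_conjTranspose, hQ.inv.isHermitian.eq, Matrix.mul_neg, Matrix.neg_mul,
      Matrix.mul_smul, Matrix.smul_mul, inv_mul_mul_add_mul_mul_inv hQdet]
  rw [← hcongr]
  exact IsUnit.posDef_star_left_conjugate_iff hQ.inv.isUnit

end Matrix

/-- If `½(QA + AᵀQ)` is negative definite, then `A = (J - R)Q` with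
`J = ½(AQ⁻¹ - Q⁻¹Aᵀ)` skew-symmetric and `R = -½(AQ⁻¹ + Q⁻¹Aᵀ)` symmetric
positive definite. -/
theorem stmt_6 (n : ℕ) (A Q : Matrix (Fin n) (Fin n) ℝ) (hQ : Q.PosDef)
    (hneg : (-((1 / 2 : ℝ) • (Q * A + Aᵀ * Q))).PosDef) :
    ((1 / 2 : ℝ) • (A * Q⁻¹ - Q⁻¹ * Aᵀ))ᵀ = -((1 / 2 : ℝ) • (A * Q⁻¹ - Q⁻¹ * Aᵀ)) ∧
    (-((1 / 2 : ℝ) • (A * Q⁻¹ + Q⁻¹ * Aᵀ)))ᵀ = -((1 / 2 : ℝ) • (A * Q⁻¹ + Q⁻¹ * Aᵀ)) ∧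
    (-((1 / 2 : ℝ) • (A * Q⁻¹ + Q⁻¹ * Aᵀ))).PosDef ∧
    A = (((1 / 2 : ℝ) • (A * Q⁻¹ - Q⁻¹ * Aᵀ))
          - (-((1 / 2 : ℝ) • (A * Q⁻¹ + Q⁻¹ * Aᵀ)))) * Q := by
  have hS : Q⁻¹ᵀ = Q⁻¹ := hQ.inv.isHermitian.eq
  refine ⟨?_, ?_, ?_, ?_⟩
  · rw [transpose_smul, transpose_mul_sub_mul_transpose A hS, smul_neg]
  · rw [transpose_neg, transpose_smul, transpose_mul_add_mul_transpose A hS]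
  · simpa only [conjTranspose_eq_transpose_of_trivial] using
      (hQ.posDef_neg_smul_mul_inv_add_iff A (1 / 2)).2
        (by simpa only [conjTranspose_eq_transpose_of_trivial] using hneg)
  · rw [half_smul_sub_sub_neg_half_smul_add,
      nonsing_inv_mul_cancel_right _ _ ((isUnit_iff_isUnit_det Q).1 hQ.isUnit)]
end

section
/- Let H ∈ ℝ^{n×n²} satisfy xᵀH(x⊗x) = 0 for all x ∈ ℝⁿ (energy-preserving). Then there exists a matrix H̃ = [H₁, ..., Hₙ] ∈ ℝ^{n×n²} with each block Hᵢ ∈ ℝ^{n×n} skew-symmetric, such that H(x⊗x) = H̃(x⊗x) for every x ∈ ℝⁿ. -/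
/-!
Polarizing the cubic form `x ↦ xᵀ H (x ⊗ x)`, which vanishes identically, gives
`zᵀ H (x ⊗ x) + xᵀ H (z ⊗ x) + xᵀ H (x ⊗ z) = 0` for all `x, z`. Let `S k` be the `k`-th block of
`H` plus the `k`-th block of `H` with the two Kronecker factors swapped. Then
`∑ k, x k • S k x = 2 H (x ⊗ x)`, while by polarization `∑ k, x k • (S k)ᵀ x = -H (x ⊗ x)`.
Hence the skew-symmetric blocks `(S k - (S k)ᵀ) / 3` reproduce `H (x ⊗ x)`.
-/

open Matrix

theorem LinearMap.polar_cubic_eq_zero {R M N : Type*} [CommRing R] [AddCommGroup M] [Module R M]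
    [AddCommGroup N] [Module R N] [IsAddTorsionFree N]
    (T : M →ₗ[R] M →ₗ[R] M →ₗ[R] N) (hT : ∀ x, T x x x = 0) (x y : M) :
    T y x x + T x y x + T x x y = 0 := by
  have hsum := hT (x + y)
  have hdiff := hT (x - y)
  simp only [map_add, map_sub, LinearMap.add_apply, LinearMap.sub_apply, hT x, hT y] at hsum hdiff
  apply nsmul_right_injective (M := N) two_ne_zero
  simp only [smul_zero]
  linear_combination (norm := module) hsum - hdiff

namespace Matrix

variable {R m n p : Type*} [CommRing R] [Fintype m] [Fintype n] [Fintype p]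

def trilinearForm (H : Matrix m (n × p) R) : (m → R) →ₗ[R] (n → R) →ₗ[R] (p → R) →ₗ[R] R :=
  LinearMap.mk₂ R (fun x y =>
    { toFun := fun z => x ⬝ᵥ H *ᵥ fun q => y q.1 * z q.2
      map_add' := fun z z' => by
        rw [← dotProduct_add, ← mulVec_add]; congr 2; ext q; exact mul_add ..
      map_smul' := fun c z => by
        rw [RingHom.id_apply, ← dotProduct_smul, ← mulVec_smul]; congr 2; ext q
        exact mul_left_comm .. })
    (fun x x' y => LinearMap.ext fun z => add_dotProduct ..)
    (fun c x y => LinearMap.ext fun z => smul_dotProduct ..)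
    (fun x y y' => LinearMap.ext fun z => by
      change _ = x ⬝ᵥ _ + x ⬝ᵥ _
      rw [← dotProduct_add, ← mulVec_add]
      exact congrArg (x ⬝ᵥ H *ᵥ ·) (funext fun q => add_mul ..))
    (fun c x y => LinearMap.ext fun z => by
      change _ = c • (x ⬝ᵥ _)
      rw [← dotProduct_smul, ← mulVec_smul]
      exact congrArg (x ⬝ᵥ H *ᵥ ·) (funext fun q => smul_mul_assoc c (y q.1) (z q.2)))

@[simp]
theorem trilinearForm_apply (H : Matrix m (n × p) R) (x : m → R) (y : n → R) (z : p → R) :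
    H.trilinearForm x y z = x ⬝ᵥ H *ᵥ fun q => y q.1 * z q.2 :=
  rfl

/-- The blocks `Bₖ` of `H = [B₁, …, Bₙ]`. -/
def block (H : Matrix m (n × p) R) (k : n) : Matrix m p R :=
  of fun a b => H a (k, b)

omit [Fintype m] in
theorem sum_smul_block_mulVec (H : Matrix m (n × p) R) (x : n → R) (y : p → R) :
    ∑ k, x k • (H.block k *ᵥ y) = H *ᵥ fun q => x q.1 * y q.2 := by
  ext a
  simp only [Finset.sum_apply, Pi.smul_apply, smul_eq_mul, mulVec, dotProduct, block, of_apply,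
    Fintype.sum_prod_type, Finset.mul_sum]
  exact Finset.sum_congr rfl fun k _ => Finset.sum_congr rfl fun b _ => by ring

theorem sum_smul_block_transpose_mulVec_dotProduct (H : Matrix m (n × p) R) (x : n → R)
    (w : m → R) (z : p → R) :
    (∑ k, x k • ((H.block k)ᵀ *ᵥ w)) ⬝ᵥ z = H.trilinearForm w x z := by
  simp only [sum_dotProduct, smul_dotProduct, mulVec_transpose, ← dotProduct_mulVec,
    ← dotProduct_smul, ← dotProduct_sum, sum_smul_block_mulVec, trilinearForm_apply]

omit [Fintype m] in
theorem submatrix_swap_mulVec (H : Matrix m (n × p) R) (x : p → R) (y : n → R) :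
    (H.submatrix id Prod.swap *ᵥ fun q => x q.1 * y q.2) = H *ᵥ fun q => y q.1 * x q.2 := by
  ext a
  simp only [mulVec, dotProduct, submatrix_apply, id]
  exact Fintype.sum_equiv (Equiv.prodComm p n) _ _ fun q => by simp [mul_comm]

end Matrix

/-- Every energy-preserving `H` admits an equivalent representation with
skew-symmetric blocks. -/
theorem stmt_11 (n : ℕ) (H : Matrix (Fin n) (Fin n × Fin n) ℝ)
    (hH : ∀ x : Fin n → ℝ, x ⬝ᵥ H.mulVec (fun p => x p.1 * x p.2) = 0) :
    ∃ Hs : Fin n → Matrix (Fin n) (Fin n) ℝ,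
      (∀ i, (Hs i)ᵀ = -(Hs i)) ∧
      ∀ x : Fin n → ℝ,
        H.mulVec (fun p => x p.1 * x p.2) = ∑ i, x i • (Hs i).mulVec x := by
  set S : Fin n → Matrix (Fin n) (Fin n) ℝ :=
    fun k => H.block k + (H.submatrix id Prod.swap).block k
  refine ⟨fun k => (3 : ℝ)⁻¹ • (S k - (S k)ᵀ), fun k => ?_, fun x => ?_⟩
  · rw [transpose_smul, transpose_sub, transpose_transpose, ← smul_neg, neg_sub]
  have hS : ∑ k, x k • (S k *ᵥ x) =
      (H *ᵥ fun p => x p.1 * x p.2) + H *ᵥ fun p => x p.1 * x p.2 := by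
    simp only [S, add_mulVec, smul_add, Finset.sum_add_distrib, sum_smul_block_mulVec,
      submatrix_swap_mulVec]
  have hSt : ∑ k, x k • ((S k)ᵀ *ᵥ x) = -(H *ᵥ fun p => x p.1 * x p.2) := by
    refine dotProduct_eq _ _ fun z => ?_
    have hpolar := LinearMap.polar_cubic_eq_zero H.trilinearForm hH x z
    simp only [S, transpose_add, add_mulVec, smul_add, Finset.sum_add_distrib, add_dotProduct,
      sum_smul_block_transpose_mulVec_dotProduct, trilinearForm_apply,
      submatrix_swap_mulVec] at hpolar ⊢
    rw [neg_dotProduct, dotProduct_comm _ z]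
    linear_combination hpolar
  simp only [smul_mulVec, sub_mulVec, smul_sub, smul_comm (x _), ← Finset.smul_sum,
    Finset.sum_sub_distrib, hS, hSt]
  module
end
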